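/- arXiv:2101.03455 — 4 statements merged into one kernel-verified Lean document; each statement's English description precedes it below -/
import Mathlib

section
/- For every tournament rule r, every ε ∈ [0,1/2], and every k ≥ 1, the maximum manipulability over weakly ε-bounded tournaments equals that over strictly ε-bounded tournaments: α_k^r(𝒯^ε) = α_k^r(𝒮^ε). -/
open scoped Classical
open Finset

/-! ## Basic tournament notions -/

/-- The set of potential matches among `n` teams: ordered pairs `(i, j)` with `i < j`. -/
abbrev MatchPair (n : ℕ) := {q : Fin n × Fin n // q.1 < q.2}

/-- A deterministic (round robin) tournament on `n` teams: for each pair `i < j`,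
`true` means that `i` beats `j`. -/
abbrev Outcome (n : ℕ) := MatchPair n → Bool

/-- `Outcome.beats o i j` holds when team `i` beats team `j` (it is `false` when `i = j`). -/
def Outcome.beats {n : ℕ} (o : Outcome n) (i j : Fin n) : Bool :=
  if h : i < j then o ⟨(i, j), h⟩
  else if h' : j < i then !o ⟨(j, i), h'⟩
  else false

/-- An independent probabilistic tournament on `n` teams: `p i j` is the probability
that `i` beats `j`, with `p i j + p j i = 1` for `i ≠ j`. -/
structure ProbTournament (n : ℕ) where
  p : Fin n → Fin n → ℝ
  mem_Icc : ∀ i j : Fin n, p i j ∈ Set.Icc (0 : ℝ) 1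
  compl : ∀ i j : Fin n, i ≠ j → p i j + p j i = 1

/-- The probability of the deterministic outcome `o` when all matches are independent
with probabilities given by `T`. -/
noncomputable def ProbTournament.prob {n : ℕ} (T : ProbTournament n) (o : Outcome n) : ℝ :=
  ∏ e : MatchPair n, (if o e then T.p e.val.1 e.val.2 else T.p e.val.2 e.val.1)

/-- `rP r T i`: the probability that team `i` wins when rule `r` is applied to the
independent probabilistic tournament `T`. -/
noncomputable def rP (r : ∀ n : ℕ, Outcome n → Fin n → ℝ) {n : ℕ}
    (T : ProbTournament n) (i : Fin n) : ℝ :=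
  ∑ o : Outcome n, T.prob o * r n o i

/-- `rPS r T S`: the probability that the winner lies in `S`. -/
noncomputable def rPS (r : ∀ n : ℕ, Outcome n → Fin n → ℝ) {n : ℕ}
    (T : ProbTournament n) (S : Finset (Fin n)) : ℝ :=
  ∑ i ∈ S, rP r T i

/-- A tournament rule assigns a probability distribution over the teams to every
deterministic tournament. -/
def IsTournamentRule (r : ∀ n : ℕ, Outcome n → Fin n → ℝ) : Prop :=
  (∀ (n : ℕ) (o : Outcome n) (i : Fin n), 0 ≤ r n o i) ∧
  (∀ n : ℕ, 0 < n → ∀ o : Outcome n, ∑ i : Fin n, r n o i = 1)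

/-- A rule is Condorcet-consistent if an undefeated team wins with probability 1. -/
def CondorcetConsistent (r : ∀ n : ℕ, Outcome n → Fin n → ℝ) : Prop :=
  ∀ (n : ℕ) (o : Outcome n) (i : Fin n),
    (∀ j : Fin n, j ≠ i → Outcome.beats o i j = true) → r n o i = 1

/-- Two independent probabilistic tournaments are `S`-adjacent if they agree on every
match that is not between two members of `S`. -/
def Adjacent {n : ℕ} (S : Finset (Fin n)) (T T' : ProbTournament n) : Prop :=
  ∀ i j : Fin n, ¬(i ∈ S ∧ j ∈ S) → T.p i j = T'.p i j

/-- Weakly ε-bounded: all match probabilities lie in `[1/2 - ε, 1/2 + ε]`. -/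
def WeaklyBounded (ε : ℝ) (n : ℕ) (T : ProbTournament n) : Prop :=
  ∀ i j : Fin n, i ≠ j → T.p i j ∈ Set.Icc (1/2 - ε) (1/2 + ε)

/-- Strictly ε-bounded: all match probabilities lie in `{1/2 - ε, 1/2 + ε}`. -/
def StrictlyBounded (ε : ℝ) (n : ℕ) (T : ProbTournament n) : Prop :=
  ∀ i j : Fin n, i ≠ j → T.p i j = 1/2 - ε ∨ T.p i j = 1/2 + ε

/-- `alph r k C`: the manipulability `α_k^r(C)`, i.e. the supremum over tournaments in the
class `C` (on any number of teams), sets `S` of at most `k` teams, and `S`-adjacent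
manipulations `T'`, of the gain `r_S(T') - r_S(T)`. -/
noncomputable def alph (r : ∀ n : ℕ, Outcome n → Fin n → ℝ) (k : ℕ)
    (C : ∀ n : ℕ, ProbTournament n → Prop) : ℝ :=
  sSup {x : ℝ | ∃ (n : ℕ) (T T' : ProbTournament n) (S : Finset (Fin n)),
    C n T ∧ S.card ≤ k ∧ Adjacent S T T' ∧ x = rPS r T' S - rPS r T S}

/-! ## Anonymity -/

/-- The relabeling of an outcome by a permutation `σ`: in `permOutcome σ o`,
team `σ i` beats team `σ j` exactly when `i` beats `j` in `o`. -/
def permOutcome {n : ℕ} (σ : Equiv.Perm (Fin n)) (o : Outcome n) : Outcome n :=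
  fun e => Outcome.beats o (σ.symm e.val.1) (σ.symm e.val.2)

/-- A tournament rule is anonymous if relabeling the teams relabels the winner
distribution accordingly. -/
def IsAnonymous (r : ∀ n : ℕ, Outcome n → Fin n → ℝ) : Prop :=
  ∀ (n : ℕ) (σ : Equiv.Perm (Fin n)) (o : Outcome n) (i : Fin n),
    r n (permOutcome σ o) (σ i) = r n o i

/-! ## Elimination rules and recursive tournament rules -/

/-- An elimination rule: for every number `n > 1` of teams, a distribution `d n` over
sets `M` of matches to be played, with `1 ≤ |M| ≤ n - 1` on the support. -/
structure ElimRule where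
  d : ∀ n : ℕ, Finset (MatchPair n) → ℝ
  nonneg : ∀ (n : ℕ) (M : Finset (MatchPair n)), 0 ≤ d n M
  sum_one : ∀ n : ℕ, 1 < n → ∑ M : Finset (MatchPair n), d n M = 1
  supp : ∀ (n : ℕ) (M : Finset (MatchPair n)), 1 < n → d n M ≠ 0 →
    1 ≤ M.card ∧ M.card ≤ n - 1

/-- A set of matches is a matching when no team appears in two distinct matches. -/
def IsMatchingSet {n : ℕ} (M : Finset (MatchPair n)) : Prop :=
  ∀ e ∈ M, ∀ e' ∈ M, e ≠ e' →
    e.val.1 ≠ e'.val.1 ∧ e.val.1 ≠ e'.val.2 ∧ e.val.2 ≠ e'.val.1 ∧ e.val.2 ≠ e'.val.2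

/-- A matching elimination rule only ever selects matchings. -/
def ElimRule.IsMatchingRule (E : ElimRule) : Prop :=
  ∀ (n : ℕ) (M : Finset (MatchPair n)), E.d n M ≠ 0 → IsMatchingSet M

/-- Team `i` loses one of the matches in `M` under the outcome `o`. -/
def losesIn {n : ℕ} (o : Outcome n) (M : Finset (MatchPair n)) (i : Fin n) : Prop :=
  ∃ e ∈ M, (e.val.1 = i ∧ Outcome.beats o e.val.2 i = true) ∨
           (e.val.2 = i ∧ Outcome.beats o e.val.1 i = true)

/-- The teams surviving the matches `M` (i.e. not losing any match of `M`). -/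
noncomputable def survivors {n : ℕ} (o : Outcome n) (M : Finset (MatchPair n)) :
    Finset (Fin n) :=
  Finset.univ.filter (fun i => ¬ losesIn o M i)

/-- The induced sub-outcome on the teams of `s`, reindexed by `Fin s.card` in
increasing order. -/
noncomputable def restrictOutcome {n : ℕ} (o : Outcome n) (s : Finset (Fin n)) :
    Outcome s.card :=
  fun e => Outcome.beats o (↑(s.orderIsoOfFin rfl e.val.1)) (↑(s.orderIsoOfFin rfl e.val.2))

/-- The induced probabilistic subtournament on the teams of `s` (same match
probabilities), reindexed by `Fin s.card` in increasing order. -/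
noncomputable def restrictProb {n : ℕ} (T : ProbTournament n) (s : Finset (Fin n)) :
    ProbTournament s.card where
  p a b := T.p ↑(s.orderIsoOfFin rfl a) ↑(s.orderIsoOfFin rfl b)
  mem_Icc _ _ := T.mem_Icc _ _
  compl a b hab := T.compl _ _
    (fun h => hab ((s.orderIsoOfFin rfl).injective (Subtype.coe_injective h)))

/-- The subset of `Fin s.card` corresponding to the members of `S` that lie in `s`. -/
noncomputable def mapTeams {n : ℕ} (s : Finset (Fin n)) (S : Finset (Fin n)) :
    Finset (Fin s.card) :=
  Finset.univ.filter (fun a => (↑(s.orderIsoOfFin rfl a) : Fin n) ∈ S)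

/-- Fueled recursion computing the winner distribution of the recursive tournament rule
`r^E`: sample `M ← E(n)`, eliminate all losers of matches in `M`, recurse on survivors. -/
noncomputable def recWinAux (E : ElimRule) : ℕ → ∀ n : ℕ, Outcome n → Fin n → ℝ
  | 0, n, _, _ => if n = 1 then 1 else 0
  | fuel + 1, n, o, i =>
    if n ≤ 1 then (if n = 1 then 1 else 0)
    else ∑ M : Finset (MatchPair n), E.d n M *
      (if h : i ∈ survivors o M then
        recWinAux E fuel (survivors o M).card (restrictOutcome o (survivors o M))
          (((survivors o M).orderIsoOfFin rfl).symm ⟨i, h⟩)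
      else 0)

/-- The recursive tournament rule `r^E` determined by the elimination rule `E`. -/
noncomputable def recWin (E : ElimRule) : ∀ n : ℕ, Outcome n → Fin n → ℝ :=
  fun n => recWinAux E n n

/-- `matchMem M u v`: the match between `u` and `v` belongs to `M`. -/
def matchMem {n : ℕ} (M : Finset (MatchPair n)) (u v : Fin n) : Prop :=
  ∃ e ∈ M, e.val = (u, v) ∨ e.val = (v, u)

/-- `valAfter r T M S`: the expected probability that the winner lies in `S` when the
matches in `M` are played with outcomes drawn from `T`, the losers are eliminated, and
`r` is then run on the induced probabilistic subtournament `T|_M` of the survivors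
(with the convention that eliminated teams win with probability `0`). -/
noncomputable def valAfter (r : ∀ n : ℕ, Outcome n → Fin n → ℝ) {n : ℕ}
    (T : ProbTournament n) (M : Finset (MatchPair n)) (S : Finset (Fin n)) : ℝ :=
  ∑ o : Outcome n, T.prob o *
    rPS r (restrictProb T (survivors o M)) (mapTeams (survivors o M) S)

/-- `U` is a base case for the manipulating coalition `S` under rule `r`:
no `S`-adjacent manipulation gains anything, i.e. `α_S^r(U) = 0`. -/
def IsBaseCase (r : ∀ n : ℕ, Outcome n → Fin n → ℝ) {m : ℕ}
    (U : ProbTournament m) (S : Finset (Fin m)) : Prop :=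
  ∀ U' : ProbTournament m, Adjacent S U U' → rPS r U' S - rPS r U S ≤ 0

/-! ## Gauntlets -/

/-- The tournament obtained from `o` by letting `u` beat every other team, keeping all
other matches intact. -/
def condorcetify {n : ℕ} (o : Outcome n) (u : Fin n) : Outcome n :=
  fun e => if e.val.1 = u then true else if e.val.2 = u then false else o e

/-- The opponents of `u` among the matches in `M`. -/
noncomputable def opponents {n : ℕ} (M : Finset (MatchPair n)) (u : Fin n) :
    Finset (Fin n) :=
  (M.filter (fun e => e.val.1 = u)).image (fun e => e.val.2) ∪
  (M.filter (fun e => e.val.2 = u)).image (fun e => e.val.1)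

/-- Fueled recursion for the distribution of the gauntlet of `u`: the set of opponents
that `u` plays in elimination matches when `r^E` is executed on a tournament in which
`u` beats everybody (the input `o` is assumed already so modified).  The value is the
probability, over the internal randomness of `E`, that the gauntlet equals `g`
(recorded as a set of teams of the outermost tournament). -/
noncomputable def gauntletDistAux (E : ElimRule) :
    ℕ → ∀ n : ℕ, Outcome n → Fin n → Finset (Fin n) → ℝ
  | 0, _, _, _, g => if g = ∅ then 1 else 0
  | fuel + 1, n, o, u, g =>
    if n ≤ 1 then (if g = ∅ then 1 else 0)
    else ∑ M : Finset (MatchPair n), E.d n M *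
      (if h : u ∈ survivors o M ∧ opponents M u ⊆ g ∧ g \ opponents M u ⊆ survivors o M then
        gauntletDistAux E fuel (survivors o M).card (restrictOutcome o (survivors o M))
          (((survivors o M).orderIsoOfFin rfl).symm ⟨u, h.1⟩)
          (Finset.univ.filter (fun a =>
            (↑((survivors o M).orderIsoOfFin rfl a) : Fin n) ∈ g \ opponents M u))
      else 0)

/-- `gauntletDist E n o u g`: the probability that the gauntlet `G^{r^E}_u(o)` of team
`u` in the deterministic tournament `o` equals the set `g`. -/
noncomputable def gauntletDist (E : ElimRule) (n : ℕ) (o : Outcome n) (u : Fin n)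
    (g : Finset (Fin n)) : ℝ :=
  gauntletDistAux E n n (condorcetify o u) u g

/-- `gauntletProbP E T u g`: the probability that the gauntlet `G^{r^E}_u(T)` of team `u`
in the independent probabilistic tournament `T` equals the set `g` (first sampling a
deterministic tournament from `T`, then the gauntlet). -/
noncomputable def gauntletProbP (E : ElimRule) {n : ℕ} (T : ProbTournament n)
    (u : Fin n) (g : Finset (Fin n)) : ℝ :=
  ∑ o : Outcome n, T.prob o * gauntletDist E n o u g

/-- Given the first-round outcome `o` and matches `M`, the probability that the gauntlet
of team `x` in the surviving probabilistic subtournament `T|_M` equals the set `g`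
(where `g` is recorded with the original team labels). -/
noncomputable def gauntletEventProb (E : ElimRule) {n : ℕ} (T : ProbTournament n)
    (M : Finset (MatchPair n)) (x : Fin n) (g : Finset (Fin n)) (o : Outcome n) : ℝ :=
  if h : x ∈ survivors o M ∧ g ⊆ survivors o M then
    gauntletProbP E (restrictProb T (survivors o M))
      (((survivors o M).orderIsoOfFin rfl).symm ⟨x, h.1⟩)
      (Finset.univ.filter (fun a =>
        (↑((survivors o M).orderIsoOfFin rfl a) : Fin n) ∈ g))
  else 0

/-! ## Randomized Death Match -/

/-- Fueled recursion for Randomized Death Match: pick one of the `n.choose 2` matches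
uniformly at random, eliminate the loser, recurse. -/
noncomputable def RDMAux : ℕ → ∀ n : ℕ, Outcome n → Fin n → ℝ
  | 0, n, _, _ => if n = 1 then 1 else 0
  | fuel + 1, n, o, i =>
    if n ≤ 1 then (if n = 1 then 1 else 0)
    else ((n.choose 2 : ℝ))⁻¹ * ∑ e : MatchPair n,
      (if h : i ∈ survivors o {e} then
        RDMAux fuel (survivors o {e}).card (restrictOutcome o (survivors o {e}))
          (((survivors o {e}).orderIsoOfFin rfl).symm ⟨i, h⟩)
      else 0)

/-- Randomized Death Match. -/
noncomputable def RDM : ∀ n : ℕ, Outcome n → Fin n → ℝ :=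
  fun n => RDMAux n n

/-! ## Randomized Single Elimination Bracket -/

/-- `nextPow2 n = 2 ^ ⌈log₂ n⌉`. -/
def nextPow2 (n : ℕ) : ℕ := 2 ^ Nat.clog 2 n

/-- Extend a tournament on `n` teams to `nextPow2 n` teams by adding dummy teams that
lose to all original teams (among themselves, the dummy with lower index wins). -/
def extendOutcome {n : ℕ} (o : Outcome n) : Outcome (nextPow2 n) :=
  fun e =>
    if h : (e.val.2 : ℕ) < n then
      Outcome.beats o ⟨(e.val.1 : ℕ), lt_trans (Fin.lt_def.mp e.2) h⟩ ⟨(e.val.2 : ℕ), h⟩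
    else true

/-- Fueled recursion for Randomized Single Elimination Bracket (after dummies have been
added): pick a uniformly random maximum matching on the remaining teams, play those
matches, eliminate all losers, recurse. -/
noncomputable def RSEBAux : ℕ → ∀ n : ℕ, Outcome n → Fin n → ℝ
  | 0, n, _, _ => if n = 1 then 1 else 0
  | fuel + 1, n, o, i =>
    if n ≤ 1 then (if n = 1 then 1 else 0)
    else
      ((Finset.univ.filter
          (fun M : Finset (MatchPair n) => IsMatchingSet M ∧ M.card = n / 2)).card : ℝ)⁻¹ *
        ∑ M ∈ Finset.univ.filter
            (fun M : Finset (MatchPair n) => IsMatchingSet M ∧ M.card = n / 2),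
          (if h : i ∈ survivors o M then
            RSEBAux fuel (survivors o M).card (restrictOutcome o (survivors o M))
              (((survivors o M).orderIsoOfFin rfl).symm ⟨i, h⟩)
          else 0)

/-- Randomized Single Elimination Bracket. -/
noncomputable def RSEB : ∀ n : ℕ, Outcome n → Fin n → ℝ :=
  fun n o i =>
    RSEBAux (nextPow2 n) (nextPow2 n) (extendOutcome o)
      (Fin.castLE (Nat.le_pow_clog one_lt_two n) i)

/-! ## Statement -/

/-! ## Auxiliary lemmas for stmt0 -/

lemma ProbTournament.ext' {n : ℕ} {T U : ProbTournament n} (h : T.p = U.p) : T = U := by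
  cases T; cases U; simp_all

lemma sum_prob_eq_one {n : ℕ} (T : ProbTournament n) : ∑ o : Outcome n, T.prob o = 1 := by
  classical
  have h : (∏ e : MatchPair n,
        ∑ b : Bool, (if b then T.p e.val.1 e.val.2 else T.p e.val.2 e.val.1))
      = ∑ o : Outcome n, T.prob o := by
    rw [Finset.prod_univ_sum, Fintype.piFinset_univ]
    rfl
  rw [← h]
  have h2 : ∀ e : MatchPair n,
      (∑ b : Bool, (if b then T.p e.val.1 e.val.2 else T.p e.val.2 e.val.1)) = 1 := by
    intro e
    have hne : e.val.1 ≠ e.val.2 := ne_of_lt e.2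
    simp only [Fintype.sum_bool, Bool.false_eq_true, if_true, if_false]
    linarith [T.compl e.val.1 e.val.2 hne]
  simp only [h2, Finset.prod_const_one]

lemma prob_nonneg {n : ℕ} (T : ProbTournament n) (o : Outcome n) : 0 ≤ T.prob o := by
  apply Finset.prod_nonneg
  intro e _
  by_cases h : o e <;> simp [h, (T.mem_Icc _ _).1]

lemma rPS_eq {n : ℕ} (r : ∀ n : ℕ, Outcome n → Fin n → ℝ) (T : ProbTournament n)
    (S : Finset (Fin n)) :
    rPS r T S = ∑ o : Outcome n, T.prob o * ∑ i ∈ S, r n o i := by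
  unfold rPS rP
  rw [Finset.sum_comm]
  simp [Finset.mul_sum]

lemma rPS_nonneg {n : ℕ} (r : ∀ n : ℕ, Outcome n → Fin n → ℝ) (hr : IsTournamentRule r)
    (T : ProbTournament n) (S : Finset (Fin n)) : 0 ≤ rPS r T S := by
  rw [rPS_eq]
  apply Finset.sum_nonneg
  intro o _
  exact mul_nonneg (prob_nonneg T o) (Finset.sum_nonneg fun i _ => hr.1 n o i)

lemma rPS_le_one {n : ℕ} (hn : 0 < n) (r : ∀ n : ℕ, Outcome n → Fin n → ℝ)
    (hr : IsTournamentRule r) (T : ProbTournament n) (S : Finset (Fin n)) :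
    rPS r T S ≤ 1 := by
  rw [rPS_eq]
  calc ∑ o : Outcome n, T.prob o * ∑ i ∈ S, r n o i
      ≤ ∑ o : Outcome n, T.prob o * 1 := by
        apply Finset.sum_le_sum
        intro o _
        apply mul_le_mul_of_nonneg_left _ (prob_nonneg T o)
        calc ∑ i ∈ S, r n o i ≤ ∑ i : Fin n, r n o i :=
              Finset.sum_le_sum_of_subset_of_nonneg (Finset.subset_univ S)
                (fun i _ _ => hr.1 n o i)
          _ = 1 := hr.2 n hn o
    _ = 1 := by simp [sum_prob_eq_one T]

/-- Replace the probability of match `e` by `t`. -/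
def setPair {n : ℕ} (T : ProbTournament n) (e : MatchPair n) (t : ℝ)
    (ht : t ∈ Set.Icc (0 : ℝ) 1) : ProbTournament n where
  p a b := if a = e.val.1 ∧ b = e.val.2 then t
    else if a = e.val.2 ∧ b = e.val.1 then 1 - t else T.p a b
  mem_Icc a b := by
    split_ifs with h1 h2
    · exact ht
    · constructor <;> [linarith [ht.2]; linarith [ht.1]]
    · exact T.mem_Icc a b
  compl a b hab := by
    have h12 : e.val.1 ≠ e.val.2 := ne_of_lt e.2
    by_cases h1 : a = e.val.1 ∧ b = e.val.2
    · obtain ⟨ha, hb⟩ := h1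
      subst ha; subst hb
      simp [h12, h12.symm]
    · by_cases h2 : a = e.val.2 ∧ b = e.val.1
      · obtain ⟨ha, hb⟩ := h2
        subst ha; subst hb
        simp [h12, h12.symm]
      · have h1' : ¬(b = e.val.1 ∧ a = e.val.2) := fun ⟨x, y⟩ => h2 ⟨y, x⟩
        have h2' : ¬(b = e.val.2 ∧ a = e.val.1) := fun ⟨x, y⟩ => h1 ⟨y, x⟩
        simp only [if_neg h1, if_neg h2, if_neg h1', if_neg h2']
        exact T.compl a b hab

lemma setPair_p_self {n : ℕ} (T : ProbTournament n) (e : MatchPair n) (t : ℝ)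
    (ht : t ∈ Set.Icc (0 : ℝ) 1) : (setPair T e t ht).p e.val.1 e.val.2 = t := by
  simp [setPair]

lemma setPair_p_of_ne {n : ℕ} (T : ProbTournament n) (e e' : MatchPair n) (t : ℝ)
    (ht : t ∈ Set.Icc (0 : ℝ) 1) (hne : e' ≠ e) :
    (setPair T e t ht).p e'.val.1 e'.val.2 = T.p e'.val.1 e'.val.2 ∧
    (setPair T e t ht).p e'.val.2 e'.val.1 = T.p e'.val.2 e'.val.1 := by
  have hlt : e.val.1 < e.val.2 := e.2
  have hlt' : e'.val.1 < e'.val.2 := e'.2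
  have hv : e'.val ≠ e.val := fun h => hne (Subtype.ext h)
  constructor
  · have h1 : ¬(e'.val.1 = e.val.1 ∧ e'.val.2 = e.val.2) := by
      rintro ⟨h, h'⟩
      exact hv (Prod.ext h h')
    have h2 : ¬(e'.val.1 = e.val.2 ∧ e'.val.2 = e.val.1) := by
      rintro ⟨h, h'⟩
      rw [h, h'] at hlt'
      exact absurd hlt (not_lt.mpr hlt'.le)
    simp [setPair, h1, h2]
  · have h1 : ¬(e'.val.2 = e.val.1 ∧ e'.val.1 = e.val.2) := by
      rintro ⟨h, h'⟩
      rw [h, h'] at hlt'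
      exact absurd hlt' (not_lt.mpr hlt.le)
    have h2 : ¬(e'.val.2 = e.val.2 ∧ e'.val.1 = e.val.1) := by
      rintro ⟨h, h'⟩
      exact hv (Prod.ext h' h)
    simp [setPair, h1, h2]

lemma setPair_self {n : ℕ} (T : ProbTournament n) (e : MatchPair n)
    (ht : T.p e.val.1 e.val.2 ∈ Set.Icc (0 : ℝ) 1) :
    setPair T e (T.p e.val.1 e.val.2) ht = T := by
  apply ProbTournament.ext'
  funext a b
  have h12 : e.val.1 ≠ e.val.2 := ne_of_lt e.2
  show (if a = e.val.1 ∧ b = e.val.2 then _ else _) = _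
  split_ifs with h1 h2
  · rw [h1.1, h1.2]
  · rw [h2.1, h2.2]
    linarith [T.compl e.val.1 e.val.2 h12]
  · rfl

lemma prob_setPair {n : ℕ} (T : ProbTournament n) (e : MatchPair n) (t : ℝ)
    (ht : t ∈ Set.Icc (0 : ℝ) 1) (o : Outcome n)
    (h0 : (0:ℝ) ∈ Set.Icc (0 : ℝ) 1) (h1 : (1:ℝ) ∈ Set.Icc (0 : ℝ) 1) :
    (setPair T e t ht).prob o =
      (1 - t) * (setPair T e 0 h0).prob o
        + t * (setPair T e 1 h1).prob o := by
  classical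
  have key : ∀ (s : ℝ) (hs : s ∈ Set.Icc (0 : ℝ) 1),
      (setPair T e s hs).prob o =
        (if o e then s else 1 - s) *
          ∏ e' ∈ Finset.univ.erase e,
            (if o e' then T.p e'.val.1 e'.val.2 else T.p e'.val.2 e'.val.1) := by
    intro s hs
    unfold ProbTournament.prob
    rw [← Finset.mul_prod_erase Finset.univ _ (Finset.mem_univ e)]
    congr 1
    · by_cases h : o e <;>
        simp [h, setPair_p_self, setPair, ne_of_lt e.2, (ne_of_lt e.2).symm]
    · apply Finset.prod_congr rfl
      intro e' he'
      have hne : e' ≠ e := (Finset.mem_erase.mp he').1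
      obtain ⟨h1, h2⟩ := setPair_p_of_ne T e e' s hs hne
      by_cases h : o e' <;> simp [h, h1, h2]
  rw [key t ht, key 0 h0, key 1 h1]
  by_cases h : o e <;> simp [h] <;> ring

lemma rPS_setPair {n : ℕ} (r : ∀ n : ℕ, Outcome n → Fin n → ℝ) (T : ProbTournament n)
    (e : MatchPair n) (t : ℝ) (ht : t ∈ Set.Icc (0 : ℝ) 1) (S : Finset (Fin n))
    (h0 : (0:ℝ) ∈ Set.Icc (0 : ℝ) 1) (h1 : (1:ℝ) ∈ Set.Icc (0 : ℝ) 1) :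
    rPS r (setPair T e t ht) S =
      (1 - t) * rPS r (setPair T e 0 h0) S
        + t * rPS r (setPair T e 1 h1) S := by
  simp only [rPS_eq, fun o => prob_setPair T e t ht o h0 h1, add_mul, mul_assoc,
    Finset.sum_add_distrib, ← Finset.mul_sum]

lemma affine_le_max (A B lo hi t : ℝ) (h1 : lo ≤ t) (h2 : t ≤ hi) :
    (1 - t) * A + t * B ≤ max ((1 - lo) * A + lo * B) ((1 - hi) * A + hi * B) := by
  rcases le_total A B with h | h
  · exact le_max_of_le_right (by nlinarith)
  · exact le_max_of_le_left (by nlinarith)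

lemma setPair_eq_self {n : ℕ} (T : ProbTournament n) (e : MatchPair n) (t : ℝ)
    (ht : t ∈ Set.Icc (0 : ℝ) 1) (h : T.p e.val.1 e.val.2 = t) :
    setPair T e t ht = T := by
  subst h; exact setPair_self T e ht

lemma strictly_of_empty_bad {ε : ℝ} {n : ℕ} (T : ProbTournament n)
    (hE : (Finset.univ.filter (fun e : MatchPair n =>
      T.p e.val.1 e.val.2 ≠ 1/2 - ε ∧ T.p e.val.1 e.val.2 ≠ 1/2 + ε)) = ∅) :
    StrictlyBounded ε n T := by
  have hall : ∀ e : MatchPair n,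
      T.p e.val.1 e.val.2 = 1/2 - ε ∨ T.p e.val.1 e.val.2 = 1/2 + ε := by
    intro e
    by_contra hc
    push_neg at hc
    have : e ∈ (Finset.univ.filter (fun e : MatchPair n =>
        T.p e.val.1 e.val.2 ≠ 1/2 - ε ∧ T.p e.val.1 e.val.2 ≠ 1/2 + ε)) := by
      exact Finset.mem_filter.mpr ⟨Finset.mem_univ _, hc⟩
    rw [hE] at this
    exact absurd this (Finset.notMem_empty e)
  intro i j hij
  rcases lt_trichotomy i j with h | h | h
  · exact hall ⟨(i, j), h⟩
  · exact absurd h hij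
  · have h1 := hall ⟨(j, i), h⟩
    have h2 := T.compl i j hij
    simp only at h1
    rcases h1 with h1 | h1 <;> [right; left] <;> linarith

lemma key_step (r : ∀ n : ℕ, Outcome n → Fin n → ℝ) (ε : ℝ)
    (hε : ε ∈ Set.Icc (0 : ℝ) (1/2)) {n : ℕ} (m : ℕ) :
    ∀ (T T' : ProbTournament n) (S : Finset (Fin n)),
    WeaklyBounded ε n T → Adjacent S T T' →
    (Finset.univ.filter (fun e : MatchPair n =>
      T.p e.val.1 e.val.2 ≠ 1/2 - ε ∧ T.p e.val.1 e.val.2 ≠ 1/2 + ε)).card ≤ m →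
    ∃ T2 T2' : ProbTournament n, StrictlyBounded ε n T2 ∧ Adjacent S T2 T2' ∧
      rPS r T' S - rPS r T S ≤ rPS r T2' S - rPS r T2 S := by
  have hlo0 : (0 : ℝ) ≤ 1/2 - ε := by linarith [hε.2]
  have hhi1 : 1/2 + ε ≤ (1 : ℝ) := by linarith [hε.2]
  have hlohi : (1 : ℝ)/2 - ε ≤ 1/2 + ε := by linarith [hε.1]
  have hlo01 : (1/2 - ε : ℝ) ∈ Set.Icc (0 : ℝ) 1 := ⟨hlo0, by linarith⟩
  have hhi01 : (1/2 + ε : ℝ) ∈ Set.Icc (0 : ℝ) 1 := ⟨by linarith, hhi1⟩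
  have h0 : (0:ℝ) ∈ Set.Icc (0 : ℝ) 1 := by norm_num
  have h1 : (1:ℝ) ∈ Set.Icc (0 : ℝ) 1 := by norm_num
  induction m with
  | zero =>
    intro T T' S hW hA hcard
    refine ⟨T, T', strictly_of_empty_bad T (Finset.card_eq_zero.mp (le_antisymm hcard (Nat.zero_le _))), hA, le_refl _⟩
  | succ m ih =>
    intro T T' S hW hA hcard
    by_cases hE : (Finset.univ.filter (fun e : MatchPair n =>
        T.p e.val.1 e.val.2 ≠ 1/2 - ε ∧ T.p e.val.1 e.val.2 ≠ 1/2 + ε)) = ∅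
    · exact ⟨T, T', strictly_of_empty_bad T hE, hA, le_refl _⟩
    obtain ⟨e, he⟩ := Finset.nonempty_iff_ne_empty.mpr hE
    have hebad := (Finset.mem_filter.mp he).2
    have he12 : e.val.1 ≠ e.val.2 := ne_of_lt e.2
    have ht : T.p e.val.1 e.val.2 ∈ Set.Icc (1/2 - ε) (1/2 + ε) := hW _ _ he12
    have ht01 : T.p e.val.1 e.val.2 ∈ Set.Icc (0 : ℝ) 1 :=
      ⟨le_trans hlo0 ht.1, le_trans ht.2 hhi1⟩
    -- common facts for the new tournament with value s at e
    have hWnew : ∀ (s : ℝ) (hs01 : s ∈ Set.Icc (0:ℝ) 1),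
        s ∈ Set.Icc (1/2 - ε) (1/2 + ε) → WeaklyBounded ε n (setPair T e s hs01) := by
      intro s hs01 hs i j hij
      show (if i = e.val.1 ∧ j = e.val.2 then s
        else if i = e.val.2 ∧ j = e.val.1 then 1 - s else T.p i j) ∈ _
      split_ifs with h1 h2
      · exact hs
      · exact ⟨by linarith [hs.2], by linarith [hs.1]⟩
      · exact hW i j hij
    have hcardnew : ∀ (s : ℝ) (hs01 : s ∈ Set.Icc (0:ℝ) 1),
        (s = 1/2 - ε ∨ s = 1/2 + ε) →
        (Finset.univ.filter (fun e' : MatchPair n =>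
          (setPair T e s hs01).p e'.val.1 e'.val.2 ≠ 1/2 - ε ∧
          (setPair T e s hs01).p e'.val.1 e'.val.2 ≠ 1/2 + ε)).card ≤ m := by
      intro s hs01 hsval
      have hsub : (Finset.univ.filter (fun e' : MatchPair n =>
          (setPair T e s hs01).p e'.val.1 e'.val.2 ≠ 1/2 - ε ∧
          (setPair T e s hs01).p e'.val.1 e'.val.2 ≠ 1/2 + ε)) ⊆
          (Finset.univ.filter (fun e' : MatchPair n =>
            T.p e'.val.1 e'.val.2 ≠ 1/2 - ε ∧ T.p e'.val.1 e'.val.2 ≠ 1/2 + ε)).erase e := by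
        intro e' he'
        have hb := (Finset.mem_filter.mp he').2
        have hne : e' ≠ e := by
          intro h
          subst h
          rw [setPair_p_self] at hb
          rcases hsval with h | h
          · exact hb.1 h
          · exact hb.2 h
        rw [(setPair_p_of_ne T e e' s hs01 hne).1] at hb
        exact Finset.mem_erase.mpr ⟨hne, Finset.mem_filter.mpr ⟨Finset.mem_univ _, hb⟩⟩
      have h1 := Finset.card_le_card hsub
      rw [Finset.card_erase_of_mem he] at h1
      omega
    by_cases hS : e.val.1 ∈ S ∧ e.val.2 ∈ S
    · -- within S: only modify T
      have hlin : ∀ (s : ℝ) (hs01 : s ∈ Set.Icc (0:ℝ) 1),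
          rPS r T' S - rPS r (setPair T e s hs01) S
            = (1 - s) * (rPS r T' S - rPS r (setPair T e 0 h0) S)
              + s * (rPS r T' S - rPS r (setPair T e 1 h1) S) := by
        intro s hs01
        rw [rPS_setPair r T e s hs01 S h0 h1]
        ring
      have hmax := affine_le_max (rPS r T' S - rPS r (setPair T e 0 h0) S)
        (rPS r T' S - rPS r (setPair T e 1 h1) S) (1/2 - ε) (1/2 + ε)
        (T.p e.val.1 e.val.2) ht.1 ht.2
      rw [← hlin _ ht01, ← hlin _ hlo01, ← hlin _ hhi01,
        setPair_eq_self T e _ ht01 rfl] at hmax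
      rcases le_max_iff.mp hmax with hle | hle
      · obtain ⟨T2, T2', hs1, hs2, hs3⟩ := ih (setPair T e (1/2 - ε) hlo01) T' S
          (hWnew _ hlo01 ⟨le_refl _, hlohi⟩)
          (by
            intro i j hij
            show (if i = e.val.1 ∧ j = e.val.2 then _
              else if i = e.val.2 ∧ j = e.val.1 then _ else T.p i j) = _
            rw [if_neg, if_neg]
            · exact hA i j hij
            · rintro ⟨h1, h2⟩; exact hij ⟨h1 ▸ hS.2, h2 ▸ hS.1⟩
            · rintro ⟨h1, h2⟩; exact hij ⟨h1 ▸ hS.1, h2 ▸ hS.2⟩)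
          (hcardnew _ hlo01 (Or.inl rfl))
        exact ⟨T2, T2', hs1, hs2, le_trans hle hs3⟩
      · obtain ⟨T2, T2', hs1, hs2, hs3⟩ := ih (setPair T e (1/2 + ε) hhi01) T' S
          (hWnew _ hhi01 ⟨hlohi, le_refl _⟩)
          (by
            intro i j hij
            show (if i = e.val.1 ∧ j = e.val.2 then _
              else if i = e.val.2 ∧ j = e.val.1 then _ else T.p i j) = _
            rw [if_neg, if_neg]
            · exact hA i j hij
            · rintro ⟨h1, h2⟩; exact hij ⟨h1 ▸ hS.2, h2 ▸ hS.1⟩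
            · rintro ⟨h1, h2⟩; exact hij ⟨h1 ▸ hS.1, h2 ▸ hS.2⟩)
          (hcardnew _ hhi01 (Or.inr rfl))
        exact ⟨T2, T2', hs1, hs2, le_trans hle hs3⟩
    · -- off S: modify both T and T'
      have hT'e : T'.p e.val.1 e.val.2 = T.p e.val.1 e.val.2 := (hA _ _ hS).symm
      have hlin : ∀ (s : ℝ) (hs01 : s ∈ Set.Icc (0:ℝ) 1),
          rPS r (setPair T' e s hs01) S - rPS r (setPair T e s hs01) S
            = (1 - s) * (rPS r (setPair T' e 0 h0) S - rPS r (setPair T e 0 h0) S)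
              + s * (rPS r (setPair T' e 1 h1) S - rPS r (setPair T e 1 h1) S) := by
        intro s hs01
        rw [rPS_setPair r T e s hs01 S h0 h1, rPS_setPair r T' e s hs01 S h0 h1]
        ring
      have hmax := affine_le_max
        (rPS r (setPair T' e 0 h0) S - rPS r (setPair T e 0 h0) S)
        (rPS r (setPair T' e 1 h1) S - rPS r (setPair T e 1 h1) S) (1/2 - ε) (1/2 + ε)
        (T.p e.val.1 e.val.2) ht.1 ht.2
      rw [← hlin _ ht01, ← hlin _ hlo01, ← hlin _ hhi01,
        setPair_eq_self T e _ ht01 rfl, setPair_eq_self T' e _ ht01 hT'e] at hmax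
      have hAdjnew : ∀ (s : ℝ) (hs01 : s ∈ Set.Icc (0:ℝ) 1),
          Adjacent S (setPair T e s hs01) (setPair T' e s hs01) := by
        intro s hs01 i j hij
        show (if i = e.val.1 ∧ j = e.val.2 then s
            else if i = e.val.2 ∧ j = e.val.1 then 1 - s else T.p i j)
          = (if i = e.val.1 ∧ j = e.val.2 then s
            else if i = e.val.2 ∧ j = e.val.1 then 1 - s else T'.p i j)
        split_ifs with h1 h2
        · rfl
        · rfl
        · exact hA i j hij
      rcases le_max_iff.mp hmax with hle | hle
      · obtain ⟨T2, T2', hs1, hs2, hs3⟩ := ih (setPair T e (1/2 - ε) hlo01)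
          (setPair T' e (1/2 - ε) hlo01) S
          (hWnew _ hlo01 ⟨le_refl _, hlohi⟩) (hAdjnew _ hlo01)
          (hcardnew _ hlo01 (Or.inl rfl))
        refine ⟨T2, T2', hs1, hs2, le_trans (le_trans hle ?_) hs3⟩
        rw [hlin _ hlo01]
      · obtain ⟨T2, T2', hs1, hs2, hs3⟩ := ih (setPair T e (1/2 + ε) hhi01)
          (setPair T' e (1/2 + ε) hhi01) S
          (hWnew _ hhi01 ⟨hlohi, le_refl _⟩) (hAdjnew _ hhi01)
          (hcardnew _ hhi01 (Or.inr rfl))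
        refine ⟨T2, T2', hs1, hs2, le_trans (le_trans hle ?_) hs3⟩
        rw [hlin _ hhi01]

lemma gain_le_one (r : ∀ n : ℕ, Outcome n → Fin n → ℝ) (hr : IsTournamentRule r)
    {n : ℕ} (T T' : ProbTournament n) (S : Finset (Fin n)) :
    rPS r T' S - rPS r T S ≤ 1 := by
  rcases Nat.eq_zero_or_pos n with h | h
  · subst h
    have hS : S = ∅ := Finset.eq_empty_of_isEmpty S
    simp [hS, rPS]
  · linarith [rPS_le_one h r hr T' S, rPS_nonneg r hr T S]

/-- The trivial tournament on zero teams. -/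
def trivialT : ProbTournament 0 :=
  ⟨fun _ _ => 0, fun i => i.elim0, fun i => i.elim0⟩

theorem stmt0 (r : ∀ n : ℕ, Outcome n → Fin n → ℝ) (hr : IsTournamentRule r)
    (ε : ℝ) (hε : ε ∈ Set.Icc (0 : ℝ) (1/2)) (k : ℕ) (hk : 1 ≤ k) :
    alph r k (WeaklyBounded ε) = alph r k (StrictlyBounded ε) := by
  classical
  have hzero : ∀ C : ∀ n : ℕ, ProbTournament n → Prop, C 0 trivialT →
      (0:ℝ) ∈ {x : ℝ | ∃ (n : ℕ) (T T' : ProbTournament n) (S : Finset (Fin n)),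
        C n T ∧ S.card ≤ k ∧ Adjacent S T T' ∧ x = rPS r T' S - rPS r T S} := by
    intro C hC
    exact ⟨0, trivialT, trivialT, ∅, hC, by simp, fun i j _ => rfl, by simp [rPS]⟩
  have hbdd : ∀ C : ∀ n : ℕ, ProbTournament n → Prop,
      BddAbove {x : ℝ | ∃ (n : ℕ) (T T' : ProbTournament n) (S : Finset (Fin n)),
        C n T ∧ S.card ≤ k ∧ Adjacent S T T' ∧ x = rPS r T' S - rPS r T S} := by
    intro C
    refine ⟨1, fun x hx => ?_⟩
    obtain ⟨n, T, T', S, -, -, -, rfl⟩ := hx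
    exact gain_le_one r hr T T' S
  have hWtriv : WeaklyBounded ε 0 trivialT := fun i => i.elim0
  have hStriv : StrictlyBounded ε 0 trivialT := fun i => i.elim0
  unfold alph
  apply le_antisymm
  · apply csSup_le ⟨0, hzero _ hWtriv⟩
    intro x hx
    obtain ⟨n, T, T', S, hWb, hSk, hAdj, rfl⟩ := hx
    obtain ⟨T2, T2', h1, h2, h3⟩ := key_step r ε hε _ T T' S hWb hAdj le_rfl
    exact le_trans h3 (le_csSup (hbdd _) ⟨n, T2, T2', S, h1, hSk, h2, rfl⟩)
  · apply csSup_le_csSup (hbdd _) ⟨0, hzero _ hStriv⟩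
    rintro x ⟨n, T, T', S, hSb, h2, h3, h4⟩
    refine ⟨n, T, T', S, ?_, h2, h3, h4⟩
    intro i j hij
    rcases hSb i j hij with h | h <;> rw [h]
    · exact ⟨le_rfl, by linarith [hε.1]⟩
    · exact ⟨by linarith [hε.1], le_rfl⟩
end

section
/- Let r be any anonymous tournament rule, let S = {u,v}, and let T, T' be independent probabilistic tournaments which are S-adjacent and satisfy p^T_{uw} = p^T_{vw} for all teams w ∉ {u,v}. Then r_S(T) = r_S(T'). -/
open scoped Classical
open Finset

/-! ## Auxiliary lemmas for stmt3 -/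

section Aux3

variable {n : ℕ}

lemma beats_antisymm' (o : Outcome n) {i j : Fin n} (h : i ≠ j) :
    Outcome.beats o j i = !Outcome.beats o i j := by
  rcases lt_or_gt_of_ne h with hlt | hgt
  · simp [Outcome.beats, hlt, lt_asymm hlt]
  · simp [Outcome.beats, hgt, lt_asymm hgt]

lemma beats_eq' (o : Outcome n) {a b : Fin n} (h : a < b) :
    Outcome.beats o a b = o ⟨(a, b), h⟩ := by
  unfold Outcome.beats
  rw [dif_pos h]

lemma beats_perm' (σ : Equiv.Perm (Fin n)) (o : Outcome n) {i j : Fin n} (h : i ≠ j) :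
    Outcome.beats (permOutcome σ o) i j = Outcome.beats o (σ.symm i) (σ.symm j) := by
  have hs : σ.symm i ≠ σ.symm j := fun he => h (σ.symm.injective he)
  rcases lt_or_gt_of_ne h with hlt | hgt
  · have l1 : Outcome.beats (permOutcome σ o) i j = (permOutcome σ o) ⟨(i, j), hlt⟩ := by
      unfold Outcome.beats; rw [dif_pos hlt]
    rw [l1]; rfl
  · have l1 : Outcome.beats (permOutcome σ o) i j = !(permOutcome σ o) ⟨(j, i), hgt⟩ := by
      unfold Outcome.beats; rw [dif_neg (lt_asymm hgt), dif_pos hgt]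
    rw [l1]
    have l2 : (permOutcome σ o ⟨(j, i), hgt⟩ : Bool)
        = Outcome.beats o (σ.symm j) (σ.symm i) := rfl
    rw [l2, beats_antisymm' o hs, Bool.not_not]

lemma permOutcome_swap_invol (u v : Fin n) (o : Outcome n) :
    permOutcome (Equiv.swap u v) (permOutcome (Equiv.swap u v) o) = o := by
  funext e
  have h12 : (Equiv.swap u v).symm e.val.1 ≠ (Equiv.swap u v).symm e.val.2 :=
    fun he => (ne_of_lt e.2) ((Equiv.swap u v).symm.injective he)
  show Outcome.beats (permOutcome (Equiv.swap u v) o)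
      ((Equiv.swap u v).symm e.val.1) ((Equiv.swap u v).symm e.val.2) = o e
  rw [beats_perm' _ _ h12]
  simp only [Equiv.symm_swap, Equiv.swap_apply_self]
  exact beats_eq' o e.2

/-- The sorted match pair on the two distinct teams `u`, `v`. -/
noncomputable def epair (u v : Fin n) (h : u ≠ v) : MatchPair n :=
  if hlt : u < v then ⟨(u, v), hlt⟩ else ⟨(v, u), h.lt_or_gt.resolve_left hlt⟩

lemma epair_swap (u v : Fin n) (h : u ≠ v) :
    Equiv.swap u v (epair u v h).val.1 = (epair u v h).val.2 ∧
    Equiv.swap u v (epair u v h).val.2 = (epair u v h).val.1 := by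
  unfold epair
  split_ifs with hlt
  · exact ⟨Equiv.swap_apply_left u v, Equiv.swap_apply_right u v⟩
  · exact ⟨Equiv.swap_apply_right u v, Equiv.swap_apply_left u v⟩

lemma ne_epair {u v : Fin n} (h : u ≠ v) {e : MatchPair n} (hne : e ≠ epair u v h) :
    ¬(e.val.1 ∈ ({u, v} : Finset (Fin n)) ∧ e.val.2 ∈ ({u, v} : Finset (Fin n))) := by
  rintro ⟨h1, h2⟩
  simp only [Finset.mem_insert, Finset.mem_singleton] at h1 h2
  rcases h1 with h1 | h1 <;> rcases h2 with h2 | h2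
  · exact (ne_of_lt e.2) (h1.trans h2.symm)
  · subst h1; subst h2
    apply hne
    have : epair e.val.1 e.val.2 h = e := by
      unfold epair; rw [dif_pos e.2]
    exact this.symm
  · subst h1; subst h2
    apply hne
    have : epair e.val.2 e.val.1 h = e := by
      unfold epair; rw [dif_neg (lt_asymm e.2)]
    exact this.symm
  · exact (ne_of_lt e.2) (h1.trans h2.symm)

/-- The involution on match pairs induced by the swap of `u` and `v`. -/
noncomputable def pswap (u v : Fin n) (e : MatchPair n) : MatchPair n :=
  if h : Equiv.swap u v e.val.1 < Equiv.swap u v e.val.2 then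
    ⟨(Equiv.swap u v e.val.1, Equiv.swap u v e.val.2), h⟩
  else
    ⟨(Equiv.swap u v e.val.2, Equiv.swap u v e.val.1), by
      rcases lt_trichotomy (Equiv.swap u v e.val.1) (Equiv.swap u v e.val.2) with h1 | h1 | h1
      · exact absurd h1 h
      · exact absurd ((Equiv.swap u v).injective h1) (ne_of_lt e.2)
      · exact h1⟩

lemma pswap_invol (u v : Fin n) : Function.Involutive (pswap u v) := by
  rintro ⟨⟨a, b⟩, hab⟩
  by_cases h : Equiv.swap u v a < Equiv.swap u v b
  · simp only [pswap, dif_pos h, Equiv.swap_apply_self]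
    rw [dif_pos hab]
  · simp only [pswap, dif_neg h, Equiv.swap_apply_self]
    rw [dif_neg (lt_asymm hab)]
  
lemma prob_permOutcome (T : ProbTournament n) (u v : Fin n) (o : Outcome n) :
    T.prob (permOutcome (Equiv.swap u v) o) =
      ∏ e : MatchPair n,
        (if o e then T.p (Equiv.swap u v e.val.1) (Equiv.swap u v e.val.2)
         else T.p (Equiv.swap u v e.val.2) (Equiv.swap u v e.val.1)) := by
  unfold ProbTournament.prob
  refine (Fintype.prod_bijective (pswap u v) (pswap_invol u v).bijective _ _ ?_).symm
  rintro ⟨⟨a, b⟩, hab⟩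
  by_cases h : Equiv.swap u v a < Equiv.swap u v b
  · simp only [pswap, dif_pos h, permOutcome, Equiv.symm_swap, Equiv.swap_apply_self]
    rw [beats_eq' o hab]
  · simp only [pswap, dif_neg h, permOutcome, Equiv.symm_swap, Equiv.swap_apply_self]
    rw [beats_antisymm' o (ne_of_lt hab), beats_eq' o hab]
    cases o ⟨(a, b), hab⟩ <;> simp

lemma p_swap_eq (W : ProbTournament n) (u v : Fin n) (huv : u ≠ v)
    (hW : ∀ w, w ≠ u → w ≠ v → W.p u w = W.p v w)
    {i j : Fin n} (hij : i ≠ j)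
    (hn : ¬(i ∈ ({u, v} : Finset (Fin n)) ∧ j ∈ ({u, v} : Finset (Fin n)))) :
    W.p (Equiv.swap u v i) (Equiv.swap u v j) = W.p i j := by
  have hW' : ∀ w, w ≠ u → w ≠ v → W.p w u = W.p w v := by
    intro w h1 h2
    have e1 := W.compl w u h1
    have e2 := W.compl w v h2
    have e3 := hW w h1 h2
    have e4 := W.compl u w (Ne.symm h1)
    have e5 := W.compl v w (Ne.symm h2)
    linarith
  have hmem : ∀ w : Fin n, w = u ∨ w = v → w ∈ ({u, v} : Finset (Fin n)) := by
    intro w hw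
    simp only [Finset.mem_insert, Finset.mem_singleton]
    exact hw
  by_cases hiu : i = u
  · have hj1 : j ≠ u := fun h => hn ⟨hmem i (Or.inl hiu), hmem j (Or.inl h)⟩
    have hj2 : j ≠ v := fun h => hn ⟨hmem i (Or.inl hiu), hmem j (Or.inr h)⟩
    rw [hiu, Equiv.swap_apply_left, Equiv.swap_apply_of_ne_of_ne hj1 hj2]
    exact (hW j hj1 hj2).symm
  by_cases hiv : i = v
  · have hj1 : j ≠ u := fun h => hn ⟨hmem i (Or.inr hiv), hmem j (Or.inl h)⟩
    have hj2 : j ≠ v := fun h => hn ⟨hmem i (Or.inr hiv), hmem j (Or.inr h)⟩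
    rw [hiv, Equiv.swap_apply_right, Equiv.swap_apply_of_ne_of_ne hj1 hj2]
    exact hW j hj1 hj2
  · rw [Equiv.swap_apply_of_ne_of_ne hiu hiv]
    by_cases hju : j = u
    · rw [hju, Equiv.swap_apply_left]
      exact (hW' i hiu hiv).symm
    by_cases hjv : j = v
    · rw [hjv, Equiv.swap_apply_right]
      exact hW' i hiu hiv
    · rw [Equiv.swap_apply_of_ne_of_ne hju hjv]

lemma prob_add_swap (W : ProbTournament n) (u v : Fin n) (huv : u ≠ v)
    (hW : ∀ w, w ≠ u → w ≠ v → W.p u w = W.p v w) (o : Outcome n) :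
    W.prob o + W.prob (permOutcome (Equiv.swap u v) o) =
      ∏ e ∈ Finset.univ.erase (epair u v huv),
        (if o e then W.p e.val.1 e.val.2 else W.p e.val.2 e.val.1) := by
  rw [prob_permOutcome]
  unfold ProbTournament.prob
  rw [← Finset.mul_prod_erase Finset.univ
        (fun e : MatchPair n => if o e then W.p e.val.1 e.val.2 else W.p e.val.2 e.val.1)
        (Finset.mem_univ (epair u v huv)),
      ← Finset.mul_prod_erase Finset.univ
        (fun e : MatchPair n =>
          if o e then W.p (Equiv.swap u v e.val.1) (Equiv.swap u v e.val.2)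
          else W.p (Equiv.swap u v e.val.2) (Equiv.swap u v e.val.1))
        (Finset.mem_univ (epair u v huv))]
  have heq : ∀ e ∈ Finset.univ.erase (epair u v huv),
      (if o e then W.p (Equiv.swap u v e.val.1) (Equiv.swap u v e.val.2)
       else W.p (Equiv.swap u v e.val.2) (Equiv.swap u v e.val.1))
      = (if o e then W.p e.val.1 e.val.2 else W.p e.val.2 e.val.1) := by
    intro e he
    have hn := ne_epair huv (Finset.ne_of_mem_erase he)
    have h12 : e.val.1 ≠ e.val.2 := ne_of_lt e.2
    rw [p_swap_eq W u v huv hW h12 hn,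
        p_swap_eq W u v huv hW (Ne.symm h12) (fun hx => hn ⟨hx.2, hx.1⟩)]
  rw [Finset.prod_congr rfl heq]
  have hab : (epair u v huv).val.1 ≠ (epair u v huv).val.2 := ne_of_lt (epair u v huv).2
  have hsw := epair_swap u v huv
  rw [hsw.1, hsw.2]
  have hsum : (if o (epair u v huv) then W.p (epair u v huv).val.1 (epair u v huv).val.2
        else W.p (epair u v huv).val.2 (epair u v huv).val.1)
      + (if o (epair u v huv) then W.p (epair u v huv).val.2 (epair u v huv).val.1
        else W.p (epair u v huv).val.1 (epair u v huv).val.2) = 1 := by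
    cases o (epair u v huv)
    · simp only [if_neg Bool.false_ne_true]
      exact W.compl _ _ (Ne.symm hab)
    · simp only [if_pos rfl]
      exact W.compl _ _ hab
  rw [← add_mul, hsum, one_mul]

end Aux3

/-! ## Statement -/

set_option maxHeartbeats 1000000 in
theorem stmt3 (r : ∀ n : ℕ, Outcome n → Fin n → ℝ) (hr : IsTournamentRule r)
    (ha : IsAnonymous r) {n : ℕ} (u v : Fin n) (huv : u ≠ v)
    (T T' : ProbTournament n) (hadj : Adjacent {u, v} T T')
    (hsym : ∀ w : Fin n, w ≠ u → w ≠ v → T.p u w = T.p v w) :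
    rPS r T {u, v} = rPS r T' {u, v} := by
  classical
  have hsym' : ∀ w : Fin n, w ≠ u → w ≠ v → T'.p u w = T'.p v w := by
    intro w h1 h2
    have hwS : w ∉ ({u, v} : Finset (Fin n)) := by
      simp only [Finset.mem_insert, Finset.mem_singleton]
      push_neg
      exact ⟨h1, h2⟩
    have e1 : T.p u w = T'.p u w := hadj u w (fun hx => hwS hx.2)
    have e2 : T.p v w = T'.p v w := hadj v w (fun hx => hwS hx.2)
    rw [← e1, ← e2]
    exact hsym w h1 h2
  have main : ∀ W : ProbTournament n, (∀ w, w ≠ u → w ≠ v → W.p u w = W.p v w) →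
      rPS r W {u, v} = (1 / 2) * ∑ o : Outcome n,
        (∏ e ∈ Finset.univ.erase (epair u v huv),
          (if o e then W.p e.val.1 e.val.2 else W.p e.val.2 e.val.1))
          * (r n o u + r n o v) := by
    intro W hW
    have h1 : rPS r W {u, v} = ∑ o : Outcome n, W.prob o * (r n o u + r n o v) := by
      unfold rPS rP
      rw [Finset.sum_pair huv, ← Finset.sum_add_distrib]
      exact Finset.sum_congr rfl (fun o _ => by ring)
    have hinv : Function.Bijective (permOutcome (Equiv.swap u v) : Outcome n → Outcome n) :=
      Function.Involutive.bijective (permOutcome_swap_invol u v)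
    have hg : ∀ o : Outcome n,
        r n (permOutcome (Equiv.swap u v) o) u + r n (permOutcome (Equiv.swap u v) o) v
          = r n o u + r n o v := by
      intro o
      have ha1 := ha n (Equiv.swap u v) o v
      have ha2 := ha n (Equiv.swap u v) o u
      rw [Equiv.swap_apply_right] at ha1
      rw [Equiv.swap_apply_left] at ha2
      linarith
    have h2 : ∑ o : Outcome n, W.prob o * (r n o u + r n o v)
        = ∑ o : Outcome n, W.prob (permOutcome (Equiv.swap u v) o) * (r n o u + r n o v) := by
      have e1 : ∑ o : Outcome n,
            W.prob (permOutcome (Equiv.swap u v) o)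
              * (r n (permOutcome (Equiv.swap u v) o) u
                 + r n (permOutcome (Equiv.swap u v) o) v)
          = ∑ o : Outcome n, W.prob o * (r n o u + r n o v) :=
        Fintype.sum_bijective (permOutcome (Equiv.swap u v)) hinv _ _ (fun o => rfl)
      rw [← e1]
      exact Finset.sum_congr rfl (fun o _ => by rw [hg o])
    have h3 : (2 : ℝ) * ∑ o : Outcome n, W.prob o * (r n o u + r n o v)
        = ∑ o : Outcome n,
          (∏ e ∈ Finset.univ.erase (epair u v huv),
            (if o e then W.p e.val.1 e.val.2 else W.p e.val.2 e.val.1))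
            * (r n o u + r n o v) := by
      calc (2 : ℝ) * ∑ o : Outcome n, W.prob o * (r n o u + r n o v)
          = (∑ o : Outcome n, W.prob o * (r n o u + r n o v))
            + ∑ o : Outcome n,
              W.prob (permOutcome (Equiv.swap u v) o) * (r n o u + r n o v) := by
            rw [← h2]; ring
        _ = ∑ o : Outcome n,
              (W.prob o + W.prob (permOutcome (Equiv.swap u v) o)) * (r n o u + r n o v) := by
            rw [← Finset.sum_add_distrib]
            exact Finset.sum_congr rfl (fun o _ => by ring)
        _ = _ :=
            Finset.sum_congr rfl (fun o _ => by rw [prob_add_swap W u v huv hW o])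
    rw [h1]
    linarith
  rw [main T hsym, main T' hsym']
  congr 1
  refine Finset.sum_congr rfl (fun o _ => ?_)
  congr 1
  refine Finset.prod_congr rfl (fun e he => ?_)
  have hn := ne_epair huv (Finset.ne_of_mem_erase he)
  rw [hadj e.val.1 e.val.2 hn, hadj e.val.2 e.val.1 (fun hx => hn ⟨hx.2, hx.1⟩)]
end

section
/- For all natural numbers n, all integers i, j with 0 ≤ i, j ≤ n, and all ε ∈ [0,1/2]: (1/2+ε)^i · (1/2−ε)^{n−i} − (1/2+ε)^j · (1/2−ε)^{n−j} ≤ 2ε. -/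
theorem stmt9 (n i j : ℕ) (hi : i ≤ n) (hj : j ≤ n)
    (ε : ℝ) (hε : ε ∈ Set.Icc (0 : ℝ) (1/2)) :
    (1/2 + ε)^i * (1/2 - ε)^(n - i) - (1/2 + ε)^j * (1/2 - ε)^(n - j) ≤ 2*ε := by
  obtain ⟨hε0, hε1⟩ := hε
  have ha0 : (0:ℝ) ≤ 1/2 + ε := by linarith
  have hb0 : (0:ℝ) ≤ 1/2 - ε := by linarith
  have hba : (1/2 - ε : ℝ) ≤ 1/2 + ε := by linarith
  have key : ∀ m : ℕ, (1/2 + ε)^m - (1/2 - ε)^m ≤ 2*ε := by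
    intro m
    induction m with
    | zero => simp; linarith
    | succ k ih =>
      have hak : (0:ℝ) ≤ (1/2+ε)^k := pow_nonneg ha0 k
      have hbk : (0:ℝ) ≤ (1/2-ε)^k := pow_nonneg hb0 k
      rcases Nat.eq_zero_or_pos k with hk | hk
      · subst hk; simp; linarith
      · have hb' : (1/2-ε)^k ≤ (1/2-ε) :=
          pow_le_of_le_one hb0 (by linarith) (Nat.pos_iff_ne_zero.mp hk)
        rw [pow_succ, pow_succ]
        nlinarith [mul_le_mul_of_nonneg_right ih ha0]
  have h1 : (1/2 + ε)^i * (1/2 - ε)^(n - i) ≤ (1/2 + ε)^n := by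
    calc (1/2 + ε)^i * (1/2 - ε)^(n - i)
        ≤ (1/2 + ε)^i * (1/2 + ε)^(n - i) := by
          gcongr
      _ = (1/2 + ε)^n := by
          rw [← pow_add, Nat.add_sub_cancel' hi]
  have h2 : (1/2 - ε)^n ≤ (1/2 + ε)^j * (1/2 - ε)^(n - j) := by
    calc (1/2 - ε)^n = (1/2 - ε)^j * (1/2 - ε)^(n - j) := by
          rw [← pow_add, Nat.add_sub_cancel' hj]
      _ ≤ (1/2 + ε)^j * (1/2 - ε)^(n - j) := by
          gcongr
  linarith [key n]
end

section
/- Let ε ∈ [0,1/2] and let T be the independent probabilistic tournament on three teams u, v, w with p^T_{uv} = p^T_{vw} = p^T_{wu} = 1/2 + ε. Let T^{uv} be the {u,v}-adjacent tournament obtained from T by setting p_{uv} = 0 (u throws the match to v), and define T^{vw} and T^{wu} analogously. Then for every Condorcet-consistent tournament rule r: (r_{{u,v}}(T^{uv}) − r_{{u,v}}(T)) + (r_{{v,w}}(T^{vw}) − r_{{v,w}}(T)) + (r_{{w,u}}(T^{wu}) − r_{{w,u}}(T)) = 2ε(1/2 + ε). In particular at least one of the three pairs gains at least (2/3)ε(1/2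 + ε) = ε/3 + 2ε²/3 by manipulating. -/
open scoped Classical
open Finset

/-! ## Helpers for stmt14 -/

/-- Outcome on 3 teams determined by three bits: `b.1` = (u beats v),
`b.2.1` = (v beats w), `b.2.2` = (w beats u). -/
def mkO (u v w : Fin 3) (b : Bool × Bool × Bool) : Outcome 3 := fun e =>
  if e.val = (u, v) then b.1 else if e.val = (v, u) then !b.1 else
  if e.val = (v, w) then b.2.1 else if e.val = (w, v) then !b.2.1 else
  if e.val = (w, u) then b.2.2 else !b.2.2

lemma univ_MP : (Finset.univ : Finset (MatchPair 3)) =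
    {⟨((0 : Fin 3), (1 : Fin 3)), by decide⟩, ⟨((0 : Fin 3), (2 : Fin 3)), by decide⟩,
     ⟨((1 : Fin 3), (2 : Fin 3)), by decide⟩} := by decide

lemma prod_MP (f : MatchPair 3 → ℝ) :
    ∏ e : MatchPair 3, f e =
      f ⟨((0 : Fin 3), (1 : Fin 3)), by decide⟩ * f ⟨((0 : Fin 3), (2 : Fin 3)), by decide⟩ *
        f ⟨((1 : Fin 3), (2 : Fin 3)), by decide⟩ := by
  rw [univ_MP, Finset.prod_insert (by decide), Finset.prod_insert (by decide),
    Finset.prod_singleton, mul_assoc]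

lemma mkO_inj : ∀ u v w : Fin 3, u ≠ v → v ≠ w → w ≠ u →
    ∀ a b : Bool × Bool × Bool, mkO u v w a = mkO u v w b → a = b := by decide

lemma mkO_bij (u v w : Fin 3) (huv : u ≠ v) (hvw : v ≠ w) (hwu : w ≠ u) :
    Function.Bijective (mkO u v w) := by
  rw [Fintype.bijective_iff_injective_and_card]
  exact ⟨fun a b => mkO_inj u v w huv hvw hwu a b, by decide⟩

lemma prob_mkO (T : ProbTournament 3) (u v w : Fin 3)
    (huv : u ≠ v) (hvw : v ≠ w) (hwu : w ≠ u) (b : Bool × Bool × Bool) :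
    T.prob (mkO u v w b) =
      (cond b.1 (T.p u v) (T.p v u)) * (cond b.2.1 (T.p v w) (T.p w v)) *
        (cond b.2.2 (T.p w u) (T.p u w)) := by
  unfold ProbTournament.prob
  rw [prod_MP]
  obtain ⟨b1, b2, b3⟩ := b
  fin_cases u <;> fin_cases v <;> fin_cases w <;>
    first
      | exact absurd rfl huv
      | exact absurd rfl hvw
      | exact absurd rfl hwu
      | (cases b1 <;> cases b2 <;> cases b3 <;> simp [mkO] <;> first | tauto | ring1 | exact Or.inl (by ring))

lemma rule_eq (r : ∀ n : ℕ, Outcome n → Fin n → ℝ) (hr : IsTournamentRule r)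
    (hcc : CondorcetConsistent r) {o : Outcome 3} {c : Fin 3}
    (h : ∀ j : Fin 3, j ≠ c → Outcome.beats o c j = true) (x : Fin 3) :
    r 3 o x = if x = c then 1 else 0 := by
  have hc : r 3 o c = 1 := hcc 3 o c h
  have hsum : ∑ i : Fin 3, r 3 o i = 1 := hr.2 3 (by norm_num) o
  rw [Fin.sum_univ_three] at hsum
  have h0 := hr.1 3 o 0
  have h1 := hr.1 3 o 1
  have h2 := hr.1 3 o 2
  fin_cases c <;> fin_cases x <;> simp_all <;> linarith

lemma condU : ∀ u v w : Fin 3, u ≠ v → v ≠ w → w ≠ u → ∀ b2 : Bool,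
    ∀ j : Fin 3, j ≠ u → Outcome.beats (mkO u v w (true, b2, false)) u j = true := by decide

lemma condV : ∀ u v w : Fin 3, u ≠ v → v ≠ w → w ≠ u → ∀ b3 : Bool,
    ∀ j : Fin 3, j ≠ v → Outcome.beats (mkO u v w (false, true, b3)) v j = true := by decide

lemma condW : ∀ u v w : Fin 3, u ≠ v → v ≠ w → w ≠ u → ∀ b1 : Bool,
    ∀ j : Fin 3, j ≠ w → Outcome.beats (mkO u v w (b1, false, true)) w j = true := by decide

lemma rotO : ∀ u v w : Fin 3, u ≠ v → v ≠ w → w ≠ u →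
    mkO v w u (true, true, true) = mkO u v w (true, true, true) ∧
    mkO v w u (false, false, false) = mkO u v w (false, false, false) := by decide

lemma masterW (r : ∀ n : ℕ, Outcome n → Fin n → ℝ) (hr : IsTournamentRule r)
    (hcc : CondorcetConsistent r) (u v w : Fin 3)
    (huv : u ≠ v) (hvw : v ≠ w) (hwu : w ≠ u) (T : ProbTournament 3) :
    rP r T w = T.p u v * T.p v w * T.p w u * r 3 (mkO u v w (true, true, true)) w
      + T.p v u * T.p w v * T.p u w * r 3 (mkO u v w (false, false, false)) w
      + T.p w v * T.p w u := by
  have hwv : w ≠ v := Ne.symm hvw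
  have e1 : r 3 (mkO u v w (true, true, false)) w = 0 := by
    rw [rule_eq r hr hcc (fun j hj => condU u v w huv hvw hwu true j hj), if_neg hwu]
  have e2 : r 3 (mkO u v w (true, false, false)) w = 0 := by
    rw [rule_eq r hr hcc (fun j hj => condU u v w huv hvw hwu false j hj), if_neg hwu]
  have e3 : r 3 (mkO u v w (false, true, true)) w = 0 := by
    rw [rule_eq r hr hcc (fun j hj => condV u v w huv hvw hwu true j hj), if_neg hwv]
  have e4 : r 3 (mkO u v w (false, true, false)) w = 0 := by
    rw [rule_eq r hr hcc (fun j hj => condV u v w huv hvw hwu false j hj), if_neg hwv]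
  have e5 : r 3 (mkO u v w (true, false, true)) w = 1 := by
    rw [rule_eq r hr hcc (fun j hj => condW u v w huv hvw hwu true j hj), if_pos rfl]
  have e6 : r 3 (mkO u v w (false, false, true)) w = 1 := by
    rw [rule_eq r hr hcc (fun j hj => condW u v w huv hvw hwu false j hj), if_pos rfl]
  have hs : rP r T w =
      ∑ b : Bool × Bool × Bool, T.prob (mkO u v w b) * r 3 (mkO u v w b) w :=
    ((mkO_bij u v w huv hvw hwu).sum_comp (fun o => T.prob o * r 3 o w)).symm
  rw [hs]
  simp only [Fintype.sum_prod_type, Fintype.sum_bool,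
    prob_mkO T u v w huv hvw hwu, Bool.cond_true, Bool.cond_false, e1, e2, e3, e4, e5, e6]
  linear_combination T.p w v * T.p w u * (T.compl u v huv)

lemma sum_prob3 (T : ProbTournament 3) : ∑ o : Outcome 3, T.prob o = 1 := by
  rw [← (mkO_bij 0 1 2 (by decide) (by decide) (by decide)).sum_comp T.prob]
  simp only [Fintype.sum_prod_type, Fintype.sum_bool,
    prob_mkO T 0 1 2 (by decide) (by decide) (by decide), Bool.cond_true, Bool.cond_false]
  linear_combination (T.p 1 2 + T.p 2 1) * (T.p 2 0 + T.p 0 2) * (T.compl 0 1 (by decide))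
    + (T.p 2 0 + T.p 0 2) * (T.compl 1 2 (by decide)) + (T.compl 2 0 (by decide))

lemma sum_univ_three' (u v w : Fin 3) (huv : u ≠ v) (hvw : v ≠ w) (hwu : w ≠ u)
    (f : Fin 3 → ℝ) : f u + f v + f w = ∑ i : Fin 3, f i := by
  rw [Fin.sum_univ_three]
  fin_cases u <;> fin_cases v <;> fin_cases w <;> simp_all <;> ring

lemma masterS (r : ∀ n : ℕ, Outcome n → Fin n → ℝ) (hr : IsTournamentRule r)
    (u v w : Fin 3) (huv : u ≠ v) (hvw : v ≠ w) (hwu : w ≠ u) (T : ProbTournament 3) :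
    rPS r T {u, v} = 1 - rP r T w := by
  have hS : rPS r T {u, v} = rP r T u + rP r T v := Finset.sum_pair huv
  have h3 : rP r T u + rP r T v + rP r T w = 1 := by
    unfold rP
    rw [← Finset.sum_add_distrib, ← Finset.sum_add_distrib]
    have key : ∀ o : Outcome 3,
        T.prob o * r 3 o u + T.prob o * r 3 o v + T.prob o * r 3 o w = T.prob o := by
      intro o
      have hone : r 3 o u + r 3 o v + r 3 o w = 1 := by
        rw [sum_univ_three' u v w huv hvw hwu]; exact hr.2 3 (by norm_num) o
      calc T.prob o * r 3 o u + T.prob o * r 3 o v + T.prob o * r 3 o w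
          = T.prob o * (r 3 o u + r 3 o v + r 3 o w) := by ring
        _ = T.prob o := by rw [hone, mul_one]
    rw [Finset.sum_congr rfl (fun o _ => key o)]
    exact sum_prob3 T
  linarith

/-! ## Statement -/

theorem stmt14 (ε : ℝ) (hε : ε ∈ Set.Icc (0 : ℝ) (1/2))
    (r : ∀ n : ℕ, Outcome n → Fin n → ℝ) (hr : IsTournamentRule r)
    (hcc : CondorcetConsistent r)
    (u v w : Fin 3) (huv : u ≠ v) (hvw : v ≠ w) (hwu : w ≠ u)
    (T Tuv Tvw Twu : ProbTournament 3)
    (hTuv : T.p u v = 1/2 + ε) (hTvw : T.p v w = 1/2 + ε) (hTwu : T.p w u = 1/2 + ε)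
    (hAuv : Adjacent {u, v} T Tuv) (huv0 : Tuv.p u v = 0)
    (hAvw : Adjacent {v, w} T Tvw) (hvw0 : Tvw.p v w = 0)
    (hAwu : Adjacent {w, u} T Twu) (hwu0 : Twu.p w u = 0) :
    (rPS r Tuv {u, v} - rPS r T {u, v}) + (rPS r Tvw {v, w} - rPS r T {v, w})
        + (rPS r Twu {w, u} - rPS r T {w, u}) = 2*ε*(1/2 + ε)
    ∧ (ε/3 + 2*ε^2/3 ≤ rPS r Tuv {u, v} - rPS r T {u, v}
       ∨ ε/3 + 2*ε^2/3 ≤ rPS r Tvw {v, w} - rPS r T {v, w}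
       ∨ ε/3 + 2*ε^2/3 ≤ rPS r Twu {w, u} - rPS r T {w, u}) := by
  have hwv : w ≠ v := Ne.symm hvw
  have huw : u ≠ w := Ne.symm hwu
  have hvu : v ≠ u := Ne.symm huv
  -- probabilities of T
  have t1 : T.p v u = 1/2 - ε := by have := T.compl u v huv; linarith
  have t2 : T.p w v = 1/2 - ε := by have := T.compl v w hvw; linarith
  have t3 : T.p u w = 1/2 - ε := by have := T.compl w u hwu; linarith
  -- probabilities of Tuv
  have hwmem : w ∉ ({u, v} : Finset (Fin 3)) := by simp [hwu, hwv]
  have a1 : Tuv.p v w = 1/2 + ε := by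
    rw [← hAuv v w (fun h => hwmem h.2)]; exact hTvw
  have a2 : Tuv.p w u = 1/2 + ε := by
    rw [← hAuv w u (fun h => hwmem h.1)]; exact hTwu
  have a3 : Tuv.p w v = 1/2 - ε := by
    rw [← hAuv w v (fun h => hwmem h.1)]; exact t2
  have a4 : Tuv.p u w = 1/2 - ε := by
    rw [← hAuv u w (fun h => hwmem h.2)]; exact t3
  have a5 : Tuv.p v u = 1 := by have := Tuv.compl u v huv; linarith
  -- probabilities of Tvw
  have humem : u ∉ ({v, w} : Finset (Fin 3)) := by simp [huv, huw]
  have b1 : Tvw.p w u = 1/2 + ε := by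
    rw [← hAvw w u (fun h => humem h.2)]; exact hTwu
  have b2 : Tvw.p u v = 1/2 + ε := by
    rw [← hAvw u v (fun h => humem h.1)]; exact hTuv
  have b3 : Tvw.p u w = 1/2 - ε := by
    rw [← hAvw u w (fun h => humem h.1)]; exact t3
  have b4 : Tvw.p v u = 1/2 - ε := by
    rw [← hAvw v u (fun h => humem h.2)]; exact t1
  have b5 : Tvw.p w v = 1 := by have := Tvw.compl v w hvw; linarith
  -- probabilities of Twu
  have hvmem : v ∉ ({w, u} : Finset (Fin 3)) := by simp [hvw, hvu]
  have c1 : Twu.p u v = 1/2 + ε := by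
    rw [← hAwu u v (fun h => hvmem h.2)]; exact hTuv
  have c2 : Twu.p v w = 1/2 + ε := by
    rw [← hAwu v w (fun h => hvmem h.1)]; exact hTvw
  have c3 : Twu.p v u = 1/2 - ε := by
    rw [← hAwu v u (fun h => hvmem h.1)]; exact t1
  have c4 : Twu.p w v = 1/2 - ε := by
    rw [← hAwu w v (fun h => hvmem h.2)]; exact t2
  have c5 : Twu.p u w = 1 := by have := Twu.compl w u hwu; linarith
  -- cycle rotations
  have rot1t := (rotO u v w huv hvw hwu).1
  have rot1f := (rotO u v w huv hvw hwu).2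
  have rot2t : mkO w u v (true, true, true) = mkO u v w (true, true, true) := by
    rw [(rotO v w u hvw hwu huv).1, rot1t]
  have rot2f : mkO w u v (false, false, false) = mkO u v w (false, false, false) := by
    rw [(rotO v w u hvw hwu huv).2, rot1f]
  -- sums of rule values on the two cycles
  have ha : r 3 (mkO u v w (true, true, true)) u + r 3 (mkO u v w (true, true, true)) v
      + r 3 (mkO u v w (true, true, true)) w = 1 := by
    rw [sum_univ_three' u v w huv hvw hwu]; exact hr.2 3 (by norm_num) _
  have hb : r 3 (mkO u v w (false, false, false)) u
      + r 3 (mkO u v w (false, false, false)) v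
      + r 3 (mkO u v w (false, false, false)) w = 1 := by
    rw [sum_univ_three' u v w huv hvw hwu]; exact hr.2 3 (by norm_num) _
  have key : (rPS r Tuv {u, v} - rPS r T {u, v}) + (rPS r Tvw {v, w} - rPS r T {v, w})
      + (rPS r Twu {w, u} - rPS r T {w, u}) = 2*ε*(1/2 + ε) := by
    rw [masterS r hr u v w huv hvw hwu T, masterS r hr u v w huv hvw hwu Tuv,
      masterS r hr v w u hvw hwu huv T, masterS r hr v w u hvw hwu huv Tvw,
      masterS r hr w u v hwu huv hvw T, masterS r hr w u v hwu huv hvw Twu,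
      masterW r hr hcc u v w huv hvw hwu T, masterW r hr hcc u v w huv hvw hwu Tuv,
      masterW r hr hcc v w u hvw hwu huv T, masterW r hr hcc v w u hvw hwu huv Tvw,
      masterW r hr hcc w u v hwu huv hvw T, masterW r hr hcc w u v hwu huv hvw Twu,
      rot1t, rot1f, rot2t, rot2f,
      hTuv, hTvw, hTwu, t1, t2, t3,
      huv0, a1, a2, a3, a4, a5,
      hvw0, b1, b2, b3, b4, b5,
      hwu0, c1, c2, c3, c4, c5]
    linear_combination ((1/2+ε)^3) * ha + ((1/2-ε)^3 - (1/2-ε)^2) * hb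
  refine ⟨key, ?_⟩
  by_contra hcon
  push_neg at hcon
  obtain ⟨g1, g2, g3⟩ := hcon
  have hring : 2*ε*(1/2+ε) = ε + 2*ε^2 := by ring
  linarith
end
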